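/- If F : ℝ^n → ℝ is convex and differentiable on an open convex domain and G(y) = ⟨∇F*(y), z⟩ where F* is the convex conjugate satisfying ∇F* = (∇F)^{-1} on the relevant set, and if x ↦ ⟨∇F(x), z⟩ is concave and the map W(x) = ⟨∇F(x), z⟩ satisfies W(x₁) ≤ W(x₂) iff x₁ ≤ x₂ (componentwise), then G(y) = ⟨∇F*(y), z⟩ is convex in y and monotone: y₁ ≤ y₂ implies G(y₁) ≤ G(y₂). -/

import Mathlib

/-!
Put `W x = ⟨∇F x, z⟩`. Since `∇F ∘ ∇F* = id`, the composite `W ∘ ∇F*` is the linear functional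
`⟨·, z⟩`, which is convex and, as `z > 0`, monotone. Because `W` reflects the componentwise order,
monotonicity of `W ∘ ∇F*` forces `∇F*` to be monotone; because `W` is moreover concave,
`W (∇F* (a y₁ + b y₂)) = a W (∇F* y₁) + b W (∇F* y₂) ≤ W (a ∇F* y₁ + b ∇F* y₂)` forces `∇F*` to be
convex as a vector-valued map. Composing with the monotone functional `⟨·, z⟩` gives both claims.
-/

open Set

section OrderReflecting

variable {α β γ : Type*} [Preorder α] [Preorder β] [Preorder γ]

theorem monotone_of_monotone_comp_of_reflects_le {g : α → β} {W : β → γ}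
    (hWg : Monotone (W ∘ g)) (hW : ∀ a b, W a ≤ W b → a ≤ b) : Monotone g :=
  fun _ _ hxy => hW _ _ (hWg hxy)

end OrderReflecting

section Convexity

variable {𝕜 E F β γ : Type*} [Semiring 𝕜] [PartialOrder 𝕜]
  [AddCommMonoid E] [Module 𝕜 E] [AddCommMonoid F] [PartialOrder F] [Module 𝕜 F]

theorem convexOn_of_convexOn_comp_of_reflects_le [AddCommMonoid γ] [PartialOrder γ] [SMul 𝕜 γ]
    {s : Set E} {g : E → F} {W : F → γ} (hWg : ConvexOn 𝕜 s (W ∘ g))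
    (hW : ConcaveOn 𝕜 univ W) (hW_reflects : ∀ a b, W a ≤ W b → a ≤ b) : ConvexOn 𝕜 s g :=
  ⟨hWg.1, fun _ hx _ hy _ _ ha hb hab => hW_reflects _ _
    ((hWg.2 hx hy ha hb hab).trans (hW.2 (mem_univ _) (mem_univ _) ha hb hab))⟩

theorem ConvexOn.linearMap_comp_of_monotone [AddCommMonoid β] [PartialOrder β] [Module 𝕜 β]
    {s : Set E} {g : E → F} (hg : ConvexOn 𝕜 s g) (ℓ : F →ₗ[𝕜] β) (hℓ : Monotone ℓ) :
    ConvexOn 𝕜 s (ℓ ∘ g) :=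
  ⟨hg.1, fun _ hx _ hy _ _ ha hb hab =>
    (hℓ (hg.2 hx hy ha hb hab)).trans_eq (by simp)⟩

end Convexity

theorem monotone_dotProduct_right {ι : Type*} [Fintype ι] {z : ι → ℝ} (hz : 0 ≤ z) :
    Monotone fun y : ι → ℝ => y ⬝ᵥ z :=
  fun _ _ hy => dotProduct_le_dotProduct_of_nonneg_right hy hz

theorem conjugate_gradient_convex_monotone_general (n : ℕ) (z : Fin n → ℝ)
    (hz : ∀ i, 0 < z i)
    (gF gFs : (Fin n → ℝ) → (Fin n → ℝ))
    (hinv₂ : ∀ y, gF (gFs y) = y)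
    (hconc : ConcaveOn ℝ Set.univ (fun x => ∑ i, gF x i * z i))
    (hmono : ∀ x₁ x₂, (∑ i, gF x₁ i * z i) ≤ (∑ i, gF x₂ i * z i) ↔ x₁ ≤ x₂) :
    ConvexOn ℝ Set.univ (fun y => ∑ i, gFs y i * z i) ∧
    ∀ y₁ y₂, y₁ ≤ y₂ → (∑ i, gFs y₁ i * z i) ≤ (∑ i, gFs y₂ i * z i) := by
  set ℓ := (dotProductBilin ℝ ℝ).flip z
  have hℓ_mono : Monotone ℓ := monotone_dotProduct_right fun i => (hz i).le
  have hW_gFs : (fun x => ∑ i, gF x i * z i) ∘ gFs = ℓ := by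
    funext y
    simp only [Function.comp_apply, hinv₂]
    rfl
  have hreflects := fun x₁ x₂ => (hmono x₁ x₂).mp
  have hgFs_mono : Monotone gFs :=
    monotone_of_monotone_comp_of_reflects_le (hW_gFs ▸ hℓ_mono) hreflects
  have hgFs_convex : ConvexOn ℝ univ gFs :=
    convexOn_of_convexOn_comp_of_reflects_le (hW_gFs ▸ ℓ.convexOn convex_univ) hconc hreflects
  exact ⟨hgFs_convex.linearMap_comp_of_monotone ℓ hℓ_mono,
    fun _ _ hy => hℓ_mono (hgFs_mono hy)⟩

/-- If `gF` (the gradient of a Legendre `F`) has `gFs` (the gradient of the conjugate)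
as its inverse, `x ↦ ⟨gF x, z⟩` is concave and monotone in the componentwise order
(as an iff), then `y ↦ ⟨gFs y, z⟩` is convex and monotone. -/
theorem conjugate_gradient_convex_monotone (n : ℕ) (z : Fin n → ℝ)
    (hz : ∀ i, 0 < z i)
    (gF gFs : (Fin n → ℝ) → (Fin n → ℝ))
    (hinv₁ : ∀ x, gFs (gF x) = x)
    (hinv₂ : ∀ y, gF (gFs y) = y)
    (hconc : ConcaveOn ℝ Set.univ (fun x => ∑ i, gF x i * z i))
    (hmono : ∀ x₁ x₂, (∑ i, gF x₁ i * z i) ≤ (∑ i, gF x₂ i * z i) ↔ x₁ ≤ x₂) :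
    ConvexOn ℝ Set.univ (fun y => ∑ i, gFs y i * z i) ∧
    ∀ y₁ y₂, y₁ ≤ y₂ → (∑ i, gFs y₁ i * z i) ≤ (∑ i, gFs y₂ i * z i) :=
  conjugate_gradient_convex_monotone_general n z hz gF gFs hinv₂ hconc hmono
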